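/- Each Jack superpolynomial expands upper triangularly in the dual basis {g_Ω}: J_Λ = Σ_{Ω≥Λ} u_{ΛΩ}(β) g_Ω with u_{ΛΛ}(β) ≠ 0, the sum over superpartitions Ω greater than or equal to Λ in the Bruhat order. -/

import Mathlib

/-!
Common framework for "Orthogonality of Jack polynomials in superspace"
(Desrosiers–Lapointe–Mathieu).

We work over the field `F = ℚ(β)` of rational functions in the parameter `β`.
Superpartitions are encoded as a finset `a` of (distinct) fermionic parts
together with a multiset `s` of positive bosonic parts.
-/

noncomputable section

open scoped BigOperators

/-- The base field `ℚ(β)`. -/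
abbrev F : Type := RatFunc ℚ

/-- The parameter `β`, the transcendental generator of `ℚ(β)`. -/
def βp : F := RatFunc.X

/-- The generalized binomial coefficient `C(β+k−1, k) = β(β+1)⋯(β+k−1)/k!`. -/
def binomβ (k : ℕ) : F := (∏ j ∈ Finset.range k, (βp + (j : F))) / (k.factorial : F)

/-- The falling factorial `(a)_k = a(a−1)⋯(a−k+1)`. -/
def fallF (a : F) (k : ℕ) : F := ∏ j ∈ Finset.range k, (a - (j : F))

/-- Evaluation of a rational function in `β` at a rational number
(junk value at poles). -/
def evalQ (q : ℚ) (f : F) : ℚ := RatFunc.eval (RingHom.id ℚ) q f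

/-! ### Partition combinatorics on multisets -/

/-- Sort a multiset of naturals in (weakly) decreasing order. -/
def sortD (M : Multiset ℕ) : List ℕ := (M.sort (· ≤ ·)).reverse

/-- `k`-th partial sum `λ₁ + ⋯ + λ_k` of the decreasing rearrangement. -/
def psum (M : Multiset ℕ) (k : ℕ) : ℕ := ((sortD M).take k).sum

/-- Strip the zero parts. -/
def stripZ (M : Multiset ℕ) : Multiset ℕ := M.filter (fun v => 0 < v)

/-- Dominance order on partitions (of the same integer). -/
def domLE (M N : Multiset ℕ) : Prop := M.sum = N.sum ∧ ∀ k, psum M k ≤ psum N k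

/-- Strict dominance order. -/
def domLT (M N : Multiset ℕ) : Prop := domLE M N ∧ stripZ M ≠ stripZ N

/-- The conjugate (transposed) partition: `λ'_j = #{i : λ_i ≥ j}`. -/
def conjM (M : Multiset ℕ) : Multiset ℕ :=
  (↑((List.range ((sortD M).headD 0)).map fun j =>
      Multiset.card (M.filter fun v => j < v)) : Multiset ℕ)

/-! ### Superpartitions -/

/-- A superpartition `Λ = (Λ₁,…,Λ_m; Λ_{m+1},…,Λ_N)`: the fermionic parts
`Λ₁ > ⋯ > Λ_m ≥ 0` form a finset `a`, and the bosonic parts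
`Λ_{m+1} ≥ ⋯ ≥ Λ_N ≥ 0` form a multiset `s` of positive integers
(trailing zero bosonic parts being immaterial). -/
structure SuperPartition where
  a : Finset ℕ
  s : Multiset ℕ
  hs : ∀ n ∈ s, 0 < n

namespace SuperPartition

instance : DecidableEq SuperPartition := Classical.decEq _

/-- The fermionic degree `m`. -/
def fdeg (Λ : SuperPartition) : ℕ := Λ.a.card

/-- The bosonic degree `n = |Λ|`. -/
def bdeg (Λ : SuperPartition) : ℕ := (∑ k ∈ Λ.a, k) + Λ.s.sum

/-- The length `ℓ(Λ) = m + (number of nonzero parts of Λˢ)`. -/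
def ell (Λ : SuperPartition) : ℕ := Λ.a.card + Multiset.card Λ.s

/-- The fermionic parts in decreasing order. -/
def sortedA (Λ : SuperPartition) : List ℕ := (Λ.a.sort (· ≤ ·)).reverse

/-- The bosonic parts in decreasing order. -/
def sortedS (Λ : SuperPartition) : List ℕ := (Λ.s.sort (· ≤ ·)).reverse

/-- All the parts `Λ₁,…,Λ_m,Λ_{m+1},…` in the standard order. -/
def parts (Λ : SuperPartition) : List ℕ := Λ.sortedA ++ Λ.sortedS

/-- `n_Λ! = n_{Λˢ}(1)! n_{Λˢ}(2)! ⋯`, the product of the factorials of the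
multiplicities of the bosonic parts. -/
def nfact (Λ : SuperPartition) : ℕ := ∏ i ∈ Λ.s.toFinset, (Λ.s.count i).factorial

/-- `z_{Λˢ} = ∏ i^{m_i} m_i!`. -/
def zs (Λ : SuperPartition) : ℕ := Λ.s.prod * Λ.nfact

/-- `z_Λ(γ) = γ^{−ℓ(Λ)} z_{Λˢ}` for a parameter `γ`. -/
def zgen (Λ : SuperPartition) (γ : F) : F := γ⁻¹ ^ Λ.ell * (Λ.zs : F)

/-- `z_Λ(β) = β^{−ℓ(Λ)} z_{Λˢ}`. -/
def zβ (Λ : SuperPartition) : F := Λ.zgen βp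

/-- The sign `(−1)^{m(m−1)/2}` (the effect of `↑` on a polynomial of
fermionic degree `m`). -/
def sgn (Λ : SuperPartition) : F := (-1 : F) ^ (Λ.fdeg * (Λ.fdeg - 1) / 2)

/-- `Λ*`: the multiset of all parts of `Λ`. -/
def star (Λ : SuperPartition) : Multiset ℕ := Λ.a.val + Λ.s

/-- The shape (row lengths) of the diagram `D[Λ]` *including* the circles:
each fermionic part contributes a row of length one more. -/
def circ (Λ : SuperPartition) : Multiset ℕ := Λ.a.val.map (· + 1) + Λ.s

/-- `Λ*` as a decreasing list. -/
def starSorted (Λ : SuperPartition) : List ℕ := sortD Λ.star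

end SuperPartition

/-- Bruhat order on superpartitions (of the same bidegree `(n|m)`):
`Ω ≤ Λ` iff `Λ* > Ω*` in dominance, or `Λ* = Ω*` and the circled shape of
`D[Λ]` dominates that of `D[Ω]`. -/
def bruhatLE (Ω Λ : SuperPartition) : Prop :=
  Ω.fdeg = Λ.fdeg ∧ Ω.bdeg = Λ.bdeg ∧
    (domLT Ω.star Λ.star ∨ (Ω.star = Λ.star ∧ domLE Ω.circ Λ.circ))

/-- Strict Bruhat order. -/
def bruhatLT (Ω Λ : SuperPartition) : Prop := bruhatLE Ω Λ ∧ Ω ≠ Λ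

/-- `Λc` is the conjugate `Λ'` of `Λ`: the diagram `D[Λc]` (circles included)
is the transpose of `D[Λ]`; equivalently both the star and the circled shape
get transposed. -/
def IsConjSP (Λ Λc : SuperPartition) : Prop :=
  stripZ Λc.star = conjM Λ.star ∧ Λc.circ = conjM Λ.circ

/-- The empty superpartition. -/
def SuperPartition.empty : SuperPartition :=
  ⟨∅, 0, fun n hn => absurd hn (Multiset.notMem_zero n)⟩

/-- The one-row superpartition `(n)` (a single bosonic part `n`). -/
def bRow (n : ℕ) : SuperPartition :=
  ⟨∅, Multiset.filter (fun v => 0 < v) {n}, fun k hk => (Multiset.mem_filter.mp hk).2⟩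

/-- The one-row superpartition `(k; 0)` (a single fermionic part `k`). -/
def fRow (k : ℕ) : SuperPartition := ⟨{k}, 0, fun n hn => absurd hn (Multiset.notMem_zero n)⟩
/-! ### Infinite sums and products of superfunctions -/

/-- `L` is the value of the infinite (ordered) product `∏_{i≥1} f i`
of a sequence in a (possibly noncommutative) topological ring. -/
def IsProdLimit {A : Type} [Ring A] [TopologicalSpace A] (f : ℕ → A) (L : A) : Prop :=
  Filter.Tendsto (fun n => ((List.range n).map f).prod) Filter.atTop (nhds L)

section Generic

variable {A : Type} {ι : Type}

/-- The binomial series `(1 − v)^{−β} = ∑_k C(β+k−1,k) v^k`. -/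
def invβSeries [Ring A] [Algebra F A] [TopologicalSpace A] (v : A) : A :=
  ∑' k : ℕ, binomβ k • v ^ k

/-- The geometric series `(1 − v)^{−1} = ∑_k v^k`. -/
def geomSeries [Ring A] [TopologicalSpace A] (v : A) : A := ∑' k : ℕ, v ^ k

/-- The bosonic power sum `p_n = ∑_i x_i^n`. -/
def pbGen [Ring A] [TopologicalSpace A] (x : ι → A) (n : ℕ) : A := ∑' i, x i ^ n

/-- The fermionic power sum `p̃_k = ∑_i θ_i x_i^k`. -/
def pfGen [Ring A] [TopologicalSpace A] (x θ : ι → A) (k : ℕ) : A := ∑' i, θ i * x i ^ k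

/-- For a multiplicative family (`gb` in the bosonic rows, `gf` in the
fermionic rows), the product
`f_Λ = f̃_{Λ₁} ⋯ f̃_{Λ_m} f_{Λ_{m+1}} ⋯ f_{Λ_N}`. -/
def prodRows [Ring A] (gb gf : ℕ → A) (Λ : SuperPartition) : A :=
  (Λ.sortedA.map gf).prod * (Λ.sortedS.map gb).prod

/-- The power sum `p_Λ = p̃_{Λ₁} ⋯ p̃_{Λ_m} p_{Λ_{m+1}} ⋯ p_{Λ_N}`. -/
def pPGen [Ring A] [TopologicalSpace A] (x θ : ι → A) (Λ : SuperPartition) : A :=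
  prodRows (pbGen x) (pfGen x θ) Λ

/-- The supermonomial `m_Λ`: the sum of all distinct terms
`θ_{σ(1)} ⋯ θ_{σ(m)} x_{σ(1)}^{Λ₁} ⋯ x_{σ(N)}^{Λ_N}`; realized as
`(n_Λ!)⁻¹` times the sum over all injections of the rows into the variables. -/
def mPGen [Ring A] [Algebra F A] [TopologicalSpace A] (x θ : ι → A)
    (Λ : SuperPartition) : A :=
  ((Λ.nfact : F))⁻¹ •
    ∑' e : Fin Λ.parts.length ↪ ι,
      ((((List.finRange Λ.parts.length).filter fun (i : Fin Λ.parts.length) => ((i : ℕ) < Λ.fdeg)).map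
          fun i => θ (e i)).prod *
        (((List.finRange Λ.parts.length).map fun i => x (e i) ^ Λ.parts.get i).prod))

/-- A pair `(t, τ)` of formal parameters: `t` is even (commutes with
everything) and `τ` is an odd (Grassmannian) parameter, `τ² = 0`, commuting
with the bosonic variables and anticommuting with the fermionic ones. -/
structure OddParam [Ring A] (x θ : ι → A) where
  t : A
  τ : A
  ht : ∀ b : A, t * b = b * t
  hττ : τ * τ = 0
  hτt : τ * t = t * τ
  hτx : ∀ i, τ * x i = x i * τ
  hτθ : ∀ i, τ * θ i = -(θ i * τ)

/-- `g_n, g̃_n` are given by the generating series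
`∏_{i≥1} (1 − t x_i − τ θ_i)^{−β} = ∑_n t^n (g_n + τ g̃_n)`,
for all admissible formal parameter pairs `(t,τ)` (parameters are tested
against the full variable family `(xa, θa)`, the product being over the
family `(xv, θv)`). -/
def GenβBy [Ring A] [Algebra F A] [TopologicalSpace A] (xa θa : ι → A)
    (xv θv : ℕ → A) (g gt : ℕ → A) : Prop :=
  ∀ pp : OddParam xa θa,
    IsProdLimit (fun i => invβSeries (pp.t * xv i + pp.τ * θv i))
      (∑' n : ℕ, pp.t ^ n * (g n + pp.τ * gt n))

/-- `h_n, h̃_n` are given by the generating series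
`∏_{i≥1} (1 − t x_i − τ θ_i)^{−1} = ∑_n t^n (h_n + τ h̃_n)`. -/
def GenGeomBy [Ring A] [TopologicalSpace A] (xa θa : ι → A)
    (xv θv : ℕ → A) (h ht : ℕ → A) : Prop :=
  ∀ pp : OddParam xa θa,
    IsProdLimit (fun i => geomSeries (pp.t * xv i + pp.τ * θv i))
      (∑' n : ℕ, pp.t ^ n * (h n + pp.τ * ht n))

/-- `e_n, ẽ_n` are given by the generating series
`∏_{i≥1} (1 + t x_i + τ θ_i) = ∑_n t^n (e_n + τ ẽ_n)`. -/
def GenElemBy [Ring A] [TopologicalSpace A] (xa θa : ι → A)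
    (xv θv : ℕ → A) (e et : ℕ → A) : Prop :=
  ∀ pp : OddParam xa θa,
    IsProdLimit (fun i => 1 + pp.t * xv i + pp.τ * θv i)
      (∑' n : ℕ, pp.t ^ n * (e n + pp.τ * et n))

/-- In `N` variables: `g_n, g̃_n` given by the (finite) generating product
`∏_{i=1}^N (1 − t x_i − τ θ_i)^{−β} = ∑_n t^n (g_n + τ g̃_n)`. -/
def GenβFin [Ring A] [Algebra F A] [TopologicalSpace A] {N : ℕ}
    (xa θa : Fin N → A) (g gt : ℕ → A) : Prop :=
  ∀ pp : OddParam xa θa,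
    (((List.finRange N).map fun i => invβSeries (pp.t * xa i + pp.τ * θa i)).prod
      = ∑' n : ℕ, pp.t ^ n * (g n + pp.τ * gt n))

end Generic

/-! ### Variables in superspace -/

/-- An (abstract, completed) ring of functions in superspace containing
infinitely many commuting variables `x_i` and anticommuting variables `θ_i`. -/
structure SuperVars (A : Type) [Ring A] where
  x : ℕ → A
  θ : ℕ → A
  hxx : ∀ i j, x i * x j = x j * x i
  hxθ : ∀ i j, x i * θ j = θ j * x i
  hθθ : ∀ i j, θ i * θ j = -(θ j * θ i)

/-- Two sets of variables in superspace `(x, θ)` and `(y, φ)` inside one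
ambient ring; all bosonic variables commute with everything, and all
fermionic variables mutually anticommute. -/
structure SuperVars2 (A : Type) [Ring A] where
  x : ℕ → A
  y : ℕ → A
  θ : ℕ → A
  φ : ℕ → A
  hxx : ∀ i j, x i * x j = x j * x i
  hyy : ∀ i j, y i * y j = y j * y i
  hxy : ∀ i j, x i * y j = y j * x i
  hxθ : ∀ i j, x i * θ j = θ j * x i
  hxφ : ∀ i j, x i * φ j = φ j * x i
  hyθ : ∀ i j, y i * θ j = θ j * y i
  hyφ : ∀ i j, y i * φ j = φ j * y i
  hθθ : ∀ i j, θ i * θ j = -(θ j * θ i)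
  hθφ : ∀ i j, θ i * φ j = -(φ j * θ i)
  hφφ : ∀ i j, φ i * φ j = -(φ j * φ i)
/-! ### The free module on power sums, and the operators H, I -/

/-- `P(β)` presented through its power-sum coordinates: the free `F`-module
with basis `{p_Λ}` indexed by superpartitions. -/
abbrev PS : Type := SuperPartition →₀ F

/-- The basis vector `p_Λ`. -/
def pUnit (Λ : SuperPartition) : PS := Finsupp.single Λ 1

/-- Lift of a map defined on the basis `{p_Λ}` to a linear endomorphism. -/
def liftP (g : SuperPartition → PS) : PS →ₗ[F] PS :=
  Finsupp.linearCombination F g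

namespace SuperPartition

/-- Adjoin a bosonic part `n ≥ 1`. -/
def addB (n : ℕ) (Λ : SuperPartition) : SuperPartition :=
  if h : 0 < n then
    ⟨Λ.a, n ::ₘ Λ.s, fun k hk => by
      rcases Multiset.mem_cons.mp hk with h' | h'
      · exact h' ▸ h
      · exact Λ.hs k h'⟩
  else Λ

/-- Remove one bosonic part `n`. -/
def eraseB (n : ℕ) (Λ : SuperPartition) : SuperPartition :=
  ⟨Λ.a, Λ.s.erase n, fun k hk => Λ.hs k (Multiset.mem_of_mem_erase hk)⟩

/-- Adjoin a fermionic part `k`. -/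
def addF (k : ℕ) (Λ : SuperPartition) : SuperPartition := ⟨insert k Λ.a, Λ.s, Λ.hs⟩

/-- Remove the fermionic part `k`. -/
def eraseF (k : ℕ) (Λ : SuperPartition) : SuperPartition := ⟨Λ.a.erase k, Λ.s, Λ.hs⟩

/-- The sign `(−1)^{#{j ∈ Λᵃ : j > k}}` produced when the odd generator
`p̃_k` is moved to its position in `p_Λ`. -/
def fsgn (k : ℕ) (Λ : SuperPartition) : F := (-1 : F) ^ (Λ.a.filter (fun j => k < j)).card

end SuperPartition

open SuperPartition in
/-- Multiplication by the bosonic power sum `p_n`. -/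
def opP (n : ℕ) : PS →ₗ[F] PS := liftP fun Λ => pUnit (addB n Λ)

open SuperPartition in
/-- The derivation `∂/∂p_n`. -/
def opDP (n : ℕ) : PS →ₗ[F] PS :=
  liftP fun Λ => (Λ.s.count n : F) • pUnit (eraseB n Λ)

open SuperPartition in
/-- (Left) multiplication by the fermionic power sum `p̃_k`. -/
def opPt (k : ℕ) : PS →ₗ[F] PS :=
  liftP fun Λ => if k ∈ Λ.a then 0 else fsgn k Λ • pUnit (addF k Λ)

open SuperPartition in
/-- The odd derivation `∂/∂p̃_k`. -/
def opDPt (k : ℕ) : PS →ₗ[F] PS :=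
  liftP fun Λ => if k ∈ Λ.a then fsgn k Λ • pUnit (eraseF k Λ) else 0

/-- The operator
`H = ∑_{n≥1} [n² + βn(N−n)] (p_n ∂_{p_n} + p̃_n ∂_{p̃_n})
 + β ∑_{m,n≥1} [(m+n) p_m p_n ∂_{p_{m+n}} + 2m p_n p̃_m ∂_{p̃_{n+m}}]
 + ∑_{m,n≥1} mn [p_{m+n} ∂_{p_n} ∂_{p_m} + 2 p̃_{n+m} ∂_{p̃_m} ∂_{p_n}]`
(each sum is finite on any fixed `p_Λ`; it is truncated at the bosonic
degree of `Λ`, beyond which all terms vanish). -/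
def Hop9 (Ncst : F) : PS →ₗ[F] PS := liftP fun Λ =>
  (∑ n ∈ Finset.Icc 1 Λ.bdeg,
      ((n : F) ^ 2 + βp * (n : F) * (Ncst - (n : F))) •
        (opP n (opDP n (pUnit Λ)) + opPt n (opDPt n (pUnit Λ))))
  + βp • (∑ m ∈ Finset.Icc 1 Λ.bdeg, ∑ n ∈ Finset.Icc 1 Λ.bdeg,
      (((m + n : ℕ) : F) • opP m (opP n (opDP (m + n) (pUnit Λ)))
        + (2 * (m : F)) • opP n (opPt m (opDPt (n + m) (pUnit Λ)))))
  + (∑ m ∈ Finset.Icc 1 Λ.bdeg, ∑ n ∈ Finset.Icc 1 Λ.bdeg,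
      ((m : F) * (n : F)) •
        (opP (m + n) (opDP n (opDP m (pUnit Λ)))
          + (2 : F) • opPt (n + m) (opDPt m (opDP n (pUnit Λ)))))

/-- The operator
`I = ∑_{n≥0} (1−β) n p̃_n ∂_{p̃_n} + (β/2) ∑_{m,n≥0} p̃_m p̃_n ∂_{p̃_m} ∂_{p̃_n}
 + ∑_{m≥0,n≥1} [n p̃_{m+n} ∂_{p̃_m} ∂_{p_n} + β p_n p̃_m ∂_{p̃_{m+n}}]`
(truncated at the bosonic degree, beyond which all terms vanish). -/
def Iop9 : PS →ₗ[F] PS := liftP fun Λ =>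
  (∑ n ∈ Finset.range (Λ.bdeg + 1), ((1 - βp) * (n : F)) • opPt n (opDPt n (pUnit Λ)))
  + (βp / 2) • (∑ m ∈ Finset.range (Λ.bdeg + 1), ∑ n ∈ Finset.range (Λ.bdeg + 1),
      opPt m (opPt n (opDPt m (opDPt n (pUnit Λ)))))
  + (∑ m ∈ Finset.range (Λ.bdeg + 1), ∑ n ∈ Finset.Icc 1 Λ.bdeg,
      ((n : F) • opPt (m + n) (opDPt m (opDP n (pUnit Λ)))
        + βp • opP n (opPt m (opDPt (m + n) (pUnit Λ)))))

/-- The combinatorial scalar product `⟨⟨·|·⟩⟩_β` in power-sum coordinates: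
`⟨⟨p_Λ | p_Ω⟩⟩_β = (−1)^{m(m−1)/2} z_Λ(β) δ_{Λ,Ω}`. -/
def spF (f g : PS) : F := f.sum fun Λ c => c * g Λ * (Λ.sgn * Λ.zβ)

/-! ### Abstract model of the ring of symmetric superfunctions -/

section Abstract

variable {P : Type} [AddCommGroup P] [Module F P]

/-- The combinatorial scalar product with parameter `γ` on a module with a
distinguished power-sum basis `pB`:
`⟨⟨p_Λ | p_Ω⟩⟩ = (−1)^{m(m−1)/2} z_Λ(γ) δ_{Λ,Ω}`. -/
def spGen (pB : Module.Basis SuperPartition F P) (γ : F) (f g : P) : F :=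
  (pB.repr f).sum fun Λ c => c * (pB.repr g) Λ * (Λ.sgn * Λ.zgen γ)

/-- `J` is monic and (strictly) upper triangular in the basis `mB` with
respect to the Bruhat order: `J_Λ = m_Λ + ∑_{Ω < Λ} c_{ΛΩ} m_Ω`. -/
def IsMonicTriangular (mB : Module.Basis SuperPartition F P) (J : SuperPartition → P) : Prop :=
  ∀ Λ, (mB.repr (J Λ)) Λ = 1 ∧ ∀ Ω, (mB.repr (J Λ)) Ω ≠ 0 → Ω = Λ ∨ bruhatLT Ω Λ

/-- The operator `H` transported to the abstract model via the power-sum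
basis. -/
def HopB (pB : Module.Basis SuperPartition F P) (Ncst : F) : P →ₗ[F] P :=
  (pB.repr.symm.toLinearMap.comp (Hop9 Ncst)).comp pB.repr.toLinearMap

/-- The operator `I` transported to the abstract model via the power-sum
basis. -/
def IopB (pB : Module.Basis SuperPartition F P) : P →ₗ[F] P :=
  (pB.repr.symm.toLinearMap.comp Iop9).comp pB.repr.toLinearMap

end Abstract

/-! ### Eigenvalues of the Calogero–Moser–Sutherland operators -/

/-- `ε_Λ(γ) = ∑_{j=1}^N [(Λ*_j)² + γ(N+1−2j) Λ*_j]`. -/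
def epsVal (N : ℕ) (Λ : SuperPartition) (γ : F) : F :=
  ∑ j ∈ Finset.range N,
    (((Λ.starSorted.getD j 0 : ℕ) : F) ^ 2
      + γ * (((N : F) + 1) - 2 * ((j : F) + 1)) * ((Λ.starSorted.getD j 0 : ℕ) : F))

/-- `ε̃_Λ(γ) = |Λᵃ| − γ |(Λ')ᵃ| − γ m(m−1)/2`, where `Λc = Λ'`. -/
def epsTVal (Λ Λc : SuperPartition) (γ : F) : F :=
  ((∑ k ∈ Λ.a, k : ℕ) : F) - γ * ((∑ k ∈ Λc.a, k : ℕ) : F)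
    - γ * ((Λ.fdeg * (Λ.fdeg - 1) / 2 : ℕ) : F)
/-! ### Dunkl–Cherednik operators in `N` variables -/

/-- A system of `N` superspace variables `(x, θ)` inside an ambient
(completed) ring `A`, together with the operator data entering the
Dunkl–Cherednik operators: the partial derivatives `∂_{x_j}`, the exchange
operators `K_{jk}` (acting on the `x`'s only), the divided-difference pieces
`O_{jk} = (x_{max(j,k) or j}/(x_j − x_k))(1 − K_{jk})`, the simultaneous
exchange operators `𝒦_σ` (acting on `x`'s and `θ`'s), and the projection
`θ₁ ∂_{θ₁}`.  The set `extra` consists of the remaining generators of the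
ambient ring (e.g. a second set of variables), which all these operators
leave untouched. -/
structure DunklSystem (N : ℕ) (A : Type) [Ring A] [Algebra F A]
    [TopologicalSpace A] [IsTopologicalRing A] where
  hN : 0 < N
  x : Fin N → A
  θ : Fin N → A
  extra : Set A
  hxx : ∀ i j, x i * x j = x j * x i
  hxθ : ∀ i j, x i * θ j = θ j * x i
  hθθ : ∀ i j, θ i * θ j = -(θ j * θ i)
  -- the partial derivatives ∂_{x_j}
  pdx : Fin N → Module.End F A
  hpdx_mul : ∀ j f g, pdx j (f * g) = pdx j f * g + f * pdx j g
  hpdx_x : ∀ j k, pdx j (x k) = if j = k then 1 else 0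
  hpdx_θ : ∀ j k, pdx j (θ k) = 0
  hpdx_extra : ∀ j b, b ∈ extra → pdx j b = 0
  hpdx_cont : ∀ j, Continuous (pdx j)
  -- the exchange operators K_{jk} (on the x's only)
  Kx : Fin N → Fin N → (A →ₐ[F] A)
  hKx_x : ∀ j k i, Kx j k (x i) = x (Equiv.swap j k i)
  hKx_θ : ∀ j k i, Kx j k (θ i) = θ i
  hKx_extra : ∀ j k b, b ∈ extra → Kx j k b = b
  hKx_cont : ∀ j k, Continuous (Kx j k)
  -- O_{jk}, characterized by (x_j − x_k) O_{jk} f = x_j (1−K_{jk}) f (k<j),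
  --                          (x_j − x_k) O_{jk} f = x_k (1−K_{jk}) f (k>j)
  O : Fin N → Fin N → Module.End F A
  hO_lt : ∀ (j k : Fin N) (f : A), (k : ℕ) < (j : ℕ) → (x j - x k) * O j k f = x j * (f - Kx j k f)
  hO_gt : ∀ (j k : Fin N) (f : A), (j : ℕ) < (k : ℕ) → (x j - x k) * O j k f = x k * (f - Kx j k f)
  hO_cont : ∀ j k, Continuous (O j k)
  -- the simultaneous exchange operators 𝒦_σ
  Ks : Equiv.Perm (Fin N) → (A →ₐ[F] A)
  hKs_x : ∀ σ i, Ks σ (x i) = x (σ i)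
  hKs_θ : ∀ σ i, Ks σ (θ i) = θ (σ i)
  hKs_extra : ∀ σ b, b ∈ extra → Ks σ b = b
  hKs_cont : ∀ σ, Continuous (Ks σ)
  -- the projection θ₁∂_{θ₁}: it kills everything generated without θ₁ and
  -- fixes θ₁ · (anything generated without θ₁)
  T1 : Module.End F A
  hT1_zero : ∀ u, u ∈ (Algebra.adjoin F
      (Set.range x ∪ (θ '' {i | i ≠ ⟨0, hN⟩}) ∪ extra)).topologicalClosure → T1 u = 0
  hT1_one : ∀ u, u ∈ (Algebra.adjoin F
      (Set.range x ∪ (θ '' {i | i ≠ ⟨0, hN⟩}) ∪ extra)).topologicalClosure →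
      T1 (θ ⟨0, hN⟩ * u) = θ ⟨0, hN⟩ * u
  hT1_cont : Continuous T1

namespace DunklSystem

variable {N : ℕ} {A : Type} [Ring A] [Algebra F A] [TopologicalSpace A]
  [IsTopologicalRing A] (S : DunklSystem N A)

/-- The Dunkl–Cherednik operator
`D_j = x_j ∂_{x_j} + γ ∑_{k<j} O_{jk} + γ ∑_{k>j} O_{jk} − γ(j−1)`. -/
def D (γ : F) (j : Fin N) : Module.End F A :=
  (LinearMap.mulLeft F (S.x j)).comp (S.pdx j)
    + γ • (∑ k ∈ Finset.univ.erase j, S.O j k)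
    - (γ * ((j : ℕ) : F)) • (LinearMap.id : A →ₗ[F] A)

/-- `H_r = ∑_{j=1}^N D_j^r`. -/
def Hr (γ : F) (r : ℕ) : Module.End F A := ∑ j : Fin N, (S.D γ j) ^ r

/-- `I_s = (1/(N−1)!) ∑_{σ ∈ S_N} 𝒦_σ (θ₁ ∂_{θ₁} D₁^s) 𝒦_σ⁻¹`. -/
def Is (γ : F) (s : ℕ) : Module.End F A :=
  (((N - 1).factorial : ℕ) : F)⁻¹ •
    ∑ σ : Equiv.Perm (Fin N),
      ((S.Ks σ).toLinearMap.comp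
        ((S.T1 * (S.D γ ⟨0, S.hN⟩) ^ s : Module.End F A).comp
          (S.Ks σ⁻¹).toLinearMap))

/-- `H = H₂ + γ(N−1) H₁ − γ N (1−3N−2N²)/6`. -/
def Hstd (γ : F) : Module.End F A :=
  S.Hr γ 2 + (γ * ((N : F) - 1)) • S.Hr γ 1
    - (γ * (N : F) * (1 - 3 * (N : F) - 2 * (N : F) ^ 2) / 6) • (1 : Module.End F A)

/-- `I = I₁`. -/
def Istd (γ : F) : Module.End F A := S.Is γ 1

end DunklSystem

/-!
Since `⟨⟨·|·⟩⟩_β` is nondegenerate and `{g_Ω}` is dual to `{m_Ω}`, every `f` expands as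
`f = ∑_Ω (−1)^{m(m−1)/2} ⟨⟨f|m_Ω⟩⟩_β g_Ω`; so it suffices to locate the nonzero pairings
`⟨⟨J_Λ|m_Ω⟩⟩_β`. Unitriangularity inverts: `m_Ω` lies in the span of the `J_Ψ` with `Ψ ≤ Ω`
(well-founded induction, there being finitely many superpartitions of each degree). By orthogonality
`⟨⟨J_Λ|m_Ω⟩⟩_β = 0` unless `Λ ≤ Ω`, and `⟨⟨J_Λ|m_Λ⟩⟩_β = ⟨⟨J_Λ|J_Λ⟩⟩_β`, which cannot vanish, since
otherwise `J_Λ` would be orthogonal to every `m_Ω`, hence zero.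
-/

lemma pairwise_sortD (M : Multiset ℕ) : (sortD M).Pairwise (· ≥ ·) :=
  List.pairwise_reverse.mpr (M.pairwise_sort _)

lemma coe_sortD (M : Multiset ℕ) : (sortD M : Multiset ℕ) = M := by
  rw [sortD, Multiset.coe_reverse, Multiset.sort_eq]

lemma psum_succ (M : Multiset ℕ) (k : ℕ) : psum M (k + 1) = psum M k + (sortD M).getD k 0 := by
  unfold psum
  cases h : (sortD M)[k]? <;> simp [List.take_add_one, h, List.getD]

lemma sortD_eq_sortD_stripZ_append (M : Multiset ℕ) :
    sortD M = sortD (stripZ M) ++ List.replicate (M.count 0) 0 := by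
  refine List.Perm.eq_of_pairwise' (r := (· ≥ ·)) (pairwise_sortD _) ?_ ?_
  · rw [List.pairwise_append]
    exact ⟨pairwise_sortD _, List.pairwise_replicate.mpr (Or.inr le_rfl),
      fun a _ b hb => (List.eq_of_mem_replicate hb).symm ▸ Nat.zero_le a⟩
  · rw [← Multiset.coe_eq_coe, ← Multiset.coe_add, coe_sortD, coe_sortD, Multiset.coe_replicate,
      ← Multiset.filter_eq', stripZ]
    conv_lhs => rw [← Multiset.filter_add_not (fun v => 0 < v) M]
    congr 1
    exact Multiset.filter_congr fun v _ => by omega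

lemma psum_stripZ (M : Multiset ℕ) (k : ℕ) : psum (stripZ M) k = psum M k := by
  rw [psum, psum, sortD_eq_sortD_stripZ_append M, List.take_append, List.sum_append,
    List.take_replicate, List.sum_replicate, smul_zero, add_zero]

lemma List.eq_of_getD_eq_of_pos {l₁ l₂ : List ℕ} (h₁ : ∀ v ∈ l₁, 0 < v) (h₂ : ∀ v ∈ l₂, 0 < v)
    (h : ∀ k, l₁.getD k 0 = l₂.getD k 0) : l₁ = l₂ := by
  induction l₁ generalizing l₂ with
  | nil =>
    cases l₂ with
    | nil => rfl
    | cons b _ => exact absurd (h 0) (h₂ b (List.mem_cons_self ..)).ne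
  | cons a l₁ ih =>
    cases l₂ with
    | nil => exact absurd (h 0) (h₁ a (List.mem_cons_self ..)).ne'
    | cons b l₂ =>
      have hab : a = b := h 0
      rw [hab, ih (fun v hv => h₁ v (List.mem_cons_of_mem _ hv))
        (fun v hv => h₂ v (List.mem_cons_of_mem _ hv)) (fun k => h (k + 1))]

/-- The nonzero parts are the positive successive differences of the partial sums. -/
lemma stripZ_eq_of_psum_eq {M N : Multiset ℕ} (h : ∀ k, psum M k = psum N k) :
    stripZ M = stripZ N := by
  have hpos : ∀ M : Multiset ℕ, ∀ v ∈ sortD (stripZ M), 0 < v := fun M v hv => by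
    rw [← Multiset.mem_coe, coe_sortD, stripZ, Multiset.mem_filter] at hv
    exact hv.2
  have hget : ∀ k, (sortD (stripZ M)).getD k 0 = (sortD (stripZ N)).getD k 0 := fun k => by
    have hM := psum_succ (stripZ M) k
    have hN := psum_succ (stripZ N) k
    simp only [psum_stripZ, h] at hM hN
    omega
  rw [← coe_sortD (stripZ M), ← coe_sortD (stripZ N),
    List.eq_of_getD_eq_of_pos (hpos M) (hpos N) hget]

lemma domLE.trans {A B C : Multiset ℕ} (h₁ : domLE A B) (h₂ : domLE B C) : domLE A C :=
  ⟨h₁.1.trans h₂.1, fun k => (h₁.2 k).trans (h₂.2 k)⟩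

lemma stripZ_eq_of_domLE_of_domLE {M N : Multiset ℕ} (h₁ : domLE M N) (h₂ : domLE N M) :
    stripZ M = stripZ N :=
  stripZ_eq_of_psum_eq fun k => (h₁.2 k).antisymm (h₂.2 k)

lemma domLE_of_stripZ_eq {M N : Multiset ℕ} (hsum : M.sum = N.sum) (h : stripZ M = stripZ N) :
    domLE M N :=
  ⟨hsum, fun k => by rw [← psum_stripZ, h, psum_stripZ]⟩

lemma domLT.trans_domLE {A B C : Multiset ℕ} (h₁ : domLT A B) (h₂ : domLE B C) : domLT A C :=
  ⟨h₁.1.trans h₂, fun hAC => h₁.2 <| stripZ_eq_of_domLE_of_domLE h₁.1 <|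
    h₂.trans (domLE_of_stripZ_eq (h₁.1.1.trans h₂.1).symm hAC.symm)⟩

lemma domLE.trans_domLT {A B C : Multiset ℕ} (h₁ : domLE A B) (h₂ : domLT B C) : domLT A C :=
  ⟨h₁.trans h₂.1, fun hAC => h₂.2 <| stripZ_eq_of_domLE_of_domLE h₂.1 <|
    (domLE_of_stripZ_eq (h₁.1.trans h₂.1.1).symm hAC.symm).trans h₁⟩

namespace SuperPartition

lemma circ_pos (Ω : SuperPartition) : ∀ v ∈ Ω.circ, 0 < v := by
  intro v hv
  rcases Multiset.mem_add.mp hv with h | h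
  · obtain ⟨w, _, rfl⟩ := Multiset.mem_map.mp h
    exact Nat.succ_pos w
  · exact Ω.hs v h

lemma stripZ_circ (Ω : SuperPartition) : stripZ Ω.circ = Ω.circ :=
  Multiset.filter_eq_self.mpr Ω.circ_pos

/-- The multiplicity of `v` is `#{fermionic parts = v} + #{bosonic parts = v}` in `Λ*` and
`#{fermionic parts = v - 1} + #{bosonic parts = v}` in the circled shape; reading these off for
`v = 0, 1, 2, …` recovers both kinds of parts. -/
lemma eq_of_star_eq_of_circ_eq {Ω Λ : SuperPartition} (hs : Ω.star = Λ.star)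
    (hc : Ω.circ = Λ.circ) : Ω = Λ := by
  have hcount : ∀ v, Ω.a.val.count v = Λ.a.val.count v ∧ Ω.s.count v = Λ.s.count v := by
    have hsv := fun w => congrArg (Multiset.count w) hs
    have hcv := fun w => congrArg (Multiset.count w) hc
    simp only [star, circ, Multiset.count_add] at hsv hcv
    have hmap0 : ∀ m : Multiset ℕ, (m.map (· + 1)).count 0 = 0 := fun m =>
      Multiset.count_eq_zero.mpr (by simp)
    have hmap : ∀ (m : Multiset ℕ) v, (m.map (· + 1)).count (v + 1) = m.count v := fun m v =>
      Multiset.count_map_eq_count' _ _ (add_left_injective 1) v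
    intro v
    induction v with
    | zero =>
      have h1 := hsv 0
      have h2 := hcv 0
      rw [hmap0, hmap0] at h2
      omega
    | succ v ih =>
      have h1 := hsv (v + 1)
      have h2 := hcv (v + 1)
      rw [hmap, hmap] at h2
      omega
  obtain ⟨a, s, _⟩ := Ω
  obtain ⟨a', s', _⟩ := Λ
  have ha : a = a' := Finset.val_inj.mp (Multiset.ext.mpr fun v => (hcount v).1)
  have hs' : s = s' := Multiset.ext.mpr fun v => (hcount v).2
  subst ha hs'
  rfl

lemma card_s_le_bdeg (Ω : SuperPartition) : Multiset.card Ω.s ≤ Ω.bdeg := by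
  have h := Multiset.card_nsmul_le_sum (a := 1) Ω.hs
  rw [smul_eq_mul, mul_one] at h
  exact h.trans (Nat.le_add_left _ _)

lemma star_sum (Ω : SuperPartition) : Ω.star.sum = Ω.bdeg := by
  rw [star, Multiset.sum_add, Finset.sum_val, bdeg]
  rfl

lemma finite_setOf_bdeg_eq (n : ℕ) : {Ω : SuperPartition | Ω.bdeg = n}.Finite := by
  have hinj : Function.Injective fun Ω : SuperPartition => (Ω.a, Ω.s) := by
    rintro ⟨a, s, _⟩ ⟨a', s', _⟩ h
    obtain ⟨rfl, rfl⟩ := Prod.mk.inj h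
    rfl
  refine ((Set.finite_Iic (Finset.range (n + 1)) |>.prod
    (Set.finite_Iic (n • Multiset.range (n + 1)))).preimage hinj.injOn).subset ?_
  rintro Ω rfl
  have hle : ∀ v ∈ Ω.star, v < Ω.bdeg + 1 := fun v hv =>
    Nat.lt_succ_of_le (Ω.star_sum ▸ Multiset.le_sum_of_mem hv)
  constructor
  · exact fun v hv => Finset.mem_range.mpr (hle v (Multiset.mem_add.mpr (Or.inl hv)))
  · refine Multiset.le_iff_count.mpr fun v => ?_
    by_cases hv : v ∈ Ω.s
    · rw [Multiset.count_nsmul, Multiset.count_eq_one_of_mem (Multiset.nodup_range _)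
        (Multiset.mem_range.mpr (hle v (Multiset.mem_add.mpr (Or.inr hv)))), mul_one]
      exact (Multiset.count_le_card v Ω.s).trans Ω.card_s_le_bdeg
    · rw [Multiset.count_eq_zero_of_notMem hv]
      exact Nat.zero_le _

end SuperPartition

lemma bruhatLE_refl (Λ : SuperPartition) : bruhatLE Λ Λ :=
  ⟨rfl, rfl, Or.inr ⟨rfl, ⟨rfl, fun _ => le_rfl⟩⟩⟩

lemma bruhatLE.trans {A B C : SuperPartition} (h₁ : bruhatLE A B) (h₂ : bruhatLE B C) :
    bruhatLE A C := by
  refine ⟨h₁.1.trans h₂.1, h₁.2.1.trans h₂.2.1, ?_⟩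
  rcases h₁.2.2 with hd₁ | ⟨he₁, hc₁⟩ <;> rcases h₂.2.2 with hd₂ | ⟨he₂, hc₂⟩
  · exact Or.inl (hd₁.trans_domLE hd₂.1)
  · exact Or.inl (he₂ ▸ hd₁)
  · exact Or.inl (he₁ ▸ hd₂)
  · exact Or.inr ⟨he₁.trans he₂, hc₁.trans hc₂⟩

lemma bruhatLE_antisymm {A B : SuperPartition} (h₁ : bruhatLE A B) (h₂ : bruhatLE B A) :
    A = B := by
  rcases h₁.2.2 with hd₁ | ⟨he₁, hc₁⟩ <;> rcases h₂.2.2 with hd₂ | ⟨he₂, hc₂⟩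
  · exact absurd (stripZ_eq_of_domLE_of_domLE hd₁.1 hd₂.1) hd₁.2
  · exact absurd (congrArg stripZ he₂.symm) hd₁.2
  · exact absurd (congrArg stripZ he₁.symm) hd₂.2
  · refine SuperPartition.eq_of_star_eq_of_circ_eq he₁ ?_
    rw [← A.stripZ_circ, ← B.stripZ_circ]
    exact stripZ_eq_of_domLE_of_domLE hc₁ hc₂

lemma bruhatLT.trans {A B C : SuperPartition} (h₁ : bruhatLT A B) (h₂ : bruhatLT B C) :
    bruhatLT A C :=
  ⟨h₁.1.trans h₂.1, by rintro rfl; exact h₂.2 (bruhatLE_antisymm h₂.1 h₁.1)⟩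

lemma finite_setOf_bruhatLE (Λ : SuperPartition) : {Ω | bruhatLE Λ Ω}.Finite :=
  (SuperPartition.finite_setOf_bdeg_eq Λ.bdeg).subset fun _ h => h.2.1.symm

lemma finite_setOf_bruhatLT (Λ : SuperPartition) : {Ω | bruhatLT Ω Λ}.Finite :=
  (SuperPartition.finite_setOf_bdeg_eq Λ.bdeg).subset fun _ h => h.1.2.1

/-- Bruhat-comparable superpartitions have the same degree, and there are finitely many of each
degree, so the number of predecessors decreases along `bruhatLT`. -/
lemma wellFounded_bruhatLT : WellFounded bruhatLT := by
  refine Subrelation.wf (fun {Ω Λ} h => ?_) (wellFounded_lt.onFun (f := fun Λ =>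
    {Ψ | bruhatLT Ψ Λ}.ncard))
  refine Set.ncard_lt_ncard ?_ (finite_setOf_bruhatLT Λ)
  exact (Set.ssubset_iff_of_subset fun Ψ hΨ => bruhatLT.trans hΨ h).mpr ⟨Ω, h, fun h' => h'.2 rfl⟩

namespace IsMonicTriangular

variable {P : Type} [AddCommGroup P] [Module F P] {mB : Module.Basis SuperPartition F P}
  {J : SuperPartition → P}

lemma eq_add_sum (hJ : IsMonicTriangular mB J) (Λ : SuperPartition) :
    J Λ = mB Λ + ∑ Ψ ∈ (mB.repr (J Λ)).support.erase Λ, mB.repr (J Λ) Ψ • mB Ψ := by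
  have hΛ : Λ ∈ (mB.repr (J Λ)).support := by
    rw [Finsupp.mem_support_iff, (hJ Λ).1]
    exact one_ne_zero
  conv_lhs => rw [← mB.linearCombination_repr (J Λ), Finsupp.linearCombination_apply,
    Finsupp.sum, ← Finset.add_sum_erase _ _ hΛ, (hJ Λ).1, one_smul]

lemma bruhatLT_of_mem (hJ : IsMonicTriangular mB J) {Λ Ψ : SuperPartition}
    (hΨ : Ψ ∈ (mB.repr (J Λ)).support.erase Λ) : bruhatLT Ψ Λ :=
  ((hJ Λ).2 Ψ (Finsupp.mem_support_iff.mp (Finset.mem_of_mem_erase hΨ))).resolve_left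
    (Finset.ne_of_mem_erase hΨ)

lemma basis_mem_span (hJ : IsMonicTriangular mB J) (Ω : SuperPartition) :
    mB Ω ∈ Submodule.span F (J '' {Ψ | bruhatLE Ψ Ω}) := by
  induction Ω using wellFounded_bruhatLT.induction with
  | _ Ω ih =>
    rw [eq_sub_of_add_eq (hJ.eq_add_sum Ω).symm]
    refine Submodule.sub_mem _ (Submodule.subset_span ⟨Ω, bruhatLE_refl Ω, rfl⟩)
      (Submodule.sum_mem _ fun Ψ hΨ => Submodule.smul_mem _ _ ?_)
    have hlt := hJ.bruhatLT_of_mem hΨ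
    exact Submodule.span_mono (Set.image_mono fun Θ hΘ => bruhatLE.trans hΘ hlt.1) (ih Ψ hlt)

variable {B : LinearMap.BilinForm F P}

lemma bruhatLE_of_form_ne_zero (hJ : IsMonicTriangular mB J)
    (horth : ∀ Λ Ψ, Λ ≠ Ψ → B (J Λ) (J Ψ) = 0) {Λ Ω : SuperPartition}
    (h : B (J Λ) (mB Ω) ≠ 0) : bruhatLE Λ Ω := by
  by_contra hΛΩ
  refine h (Submodule.span_le.mpr ?_ (hJ.basis_mem_span Ω) : mB Ω ∈ LinearMap.ker (B (J Λ)))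
  rintro _ ⟨Ψ, hΨ, rfl⟩
  exact horth Λ Ψ (by rintro rfl; exact hΛΩ hΨ)

lemma form_basis_self (hJ : IsMonicTriangular mB J)
    (horth : ∀ Λ Ψ, Λ ≠ Ψ → B (J Λ) (J Ψ) = 0) (Λ : SuperPartition) :
    B (J Λ) (mB Λ) = B (J Λ) (J Λ) := by
  have hlower : ∀ Ψ ∈ (mB.repr (J Λ)).support.erase Λ, B (J Λ) (mB Ψ) = 0 := fun Ψ hΨ => by
    have hlt := hJ.bruhatLT_of_mem hΨ
    by_contra h
    exact hlt.2 (bruhatLE_antisymm hlt.1 (hJ.bruhatLE_of_form_ne_zero horth h))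
  calc B (J Λ) (mB Λ)
      = B (J Λ) (mB Λ + ∑ Ψ ∈ (mB.repr (J Λ)).support.erase Λ, mB.repr (J Λ) Ψ • mB Ψ) := by
        rw [map_add, map_sum, Finset.sum_eq_zero fun Ψ hΨ => by rw [map_smul, hlower Ψ hΨ,
          smul_zero], add_zero]
    _ = B (J Λ) (J Λ) := by rw [← hJ.eq_add_sum Λ]

lemma form_self_ne_zero (hB : B.SeparatingLeft) (hJ : IsMonicTriangular mB J)
    (horth : ∀ Λ Ψ, Λ ≠ Ψ → B (J Λ) (J Ψ) = 0) (Λ : SuperPartition) :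
    B (J Λ) (J Λ) ≠ 0 := by
  intro h0
  have hzero : B (J Λ) = 0 := mB.ext fun Ω => by
    refine (Submodule.span_le.mpr ?_ (hJ.basis_mem_span Ω) : mB Ω ∈ LinearMap.ker (B (J Λ)))
    rintro _ ⟨Ψ, -, rfl⟩
    by_cases hΨ : Λ = Ψ
    · exact hΨ ▸ h0
    · exact horth Λ Ψ hΨ
  have h1 := (hJ Λ).1
  rw [hB (J Λ) fun y => by rw [hzero, LinearMap.zero_apply], map_zero] at h1
  exact zero_ne_one h1

end IsMonicTriangular

lemma SuperPartition.sgn_mul_self (Λ : SuperPartition) : Λ.sgn * Λ.sgn = 1 := by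
  rw [SuperPartition.sgn, ← pow_add, ← two_mul, pow_mul, neg_one_sq, one_pow]

lemma SuperPartition.sgn_ne_zero (Λ : SuperPartition) : Λ.sgn ≠ 0 :=
  left_ne_zero_of_mul_eq_one Λ.sgn_mul_self

lemma SuperPartition.zgen_ne_zero (Λ : SuperPartition) {γ : F} (hγ : γ ≠ 0) : Λ.zgen γ ≠ 0 := by
  refine mul_ne_zero (pow_ne_zero _ (inv_ne_zero hγ)) (Nat.cast_ne_zero.mpr ?_)
  exact mul_ne_zero (Multiset.prod_pos Λ.hs).ne'
    (Finset.prod_ne_zero_iff.mpr fun _ _ => Nat.factorial_ne_zero _)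

section ScalarProduct

variable {P : Type} [AddCommGroup P] [Module F P]

def spForm (pB : Module.Basis SuperPartition F P) (γ : F) : LinearMap.BilinForm F P :=
  (Finsupp.lsum F fun Λ : SuperPartition => (LinearMap.id : F →ₗ[F] F).smulRight
    ((Λ.sgn * Λ.zgen γ) • Finsupp.lapply Λ)).compl₁₂ pB.repr.toLinearMap pB.repr.toLinearMap

lemma spForm_apply (pB : Module.Basis SuperPartition F P) (γ : F) (f g : P) :
    spForm pB γ f g = spGen pB γ f g := by
  simp only [spForm, LinearMap.compl₁₂_apply, LinearEquiv.coe_coe, Finsupp.coe_lsum,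
    LinearMap.coe_smulRight, LinearMap.id_coe, id_eq, LinearMap.coe_sum, LinearMap.coe_smul,
    Finset.sum_apply, Pi.smul_apply, Finsupp.lapply_apply, smul_eq_mul, spGen, Finsupp.sum]
  exact Finset.sum_congr rfl fun _ _ => by ring

lemma spForm_basis_right (pB : Module.Basis SuperPartition F P) (γ : F) (f : P)
    (Λ : SuperPartition) : spForm pB γ f (pB Λ) = pB.repr f Λ * (Λ.sgn * Λ.zgen γ) := by
  rw [spForm_apply, spGen, pB.repr_self, Finsupp.sum_eq_single Λ]
  · simp
  · intro Ψ _ hΨ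
    rw [Finsupp.single_eq_of_ne hΨ, mul_zero, zero_mul]
  · intro _
    rw [zero_mul, zero_mul]

lemma spForm_separatingLeft (pB : Module.Basis SuperPartition F P) {γ : F} (hγ : γ ≠ 0) :
    (spForm pB γ).SeparatingLeft := fun f hf => by
  refine pB.repr.map_eq_zero_iff.mp (Finsupp.ext fun Λ => ?_)
  have h := hf (pB Λ)
  rw [spForm_basis_right] at h
  exact (mul_eq_zero.mp h).resolve_right (mul_ne_zero Λ.sgn_ne_zero
    (Λ.zgen_ne_zero hγ))

end ScalarProduct

lemma LinearMap.SeparatingLeft.eq_finsuppSum_of_dual {ι P : Type} [DecidableEq ι] [AddCommGroup P] [Module F P]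
    {B : LinearMap.BilinForm F P} (hB : B.SeparatingLeft) (b : Module.Basis ι F P)
    {g : ι → P} {ε : ι → F} (hε : ∀ i, ε i * ε i = 1)
    (hdual : ∀ i j, B (g i) (b j) = if i = j then ε i else 0) (f : P) {u : ι →₀ F}
    (hu : ∀ i, u i = ε i * B f (b i)) : f = u.sum fun i r => r • g i := by
  have hsum : ∀ j, B (u.sum fun i r => r • g i) (b j) = B f (b j) := fun j => by
    rw [map_finsuppSum, LinearMap.finsupp_sum_apply, Finsupp.sum_eq_single j]
    · rw [map_smul, LinearMap.smul_apply, hdual, if_pos rfl, smul_eq_mul, hu, mul_comm,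
        ← mul_assoc, hε, one_mul]
    · intro i _ hij
      rw [map_smul, LinearMap.smul_apply, hdual, if_neg hij, smul_zero]
    · intro _
      rw [zero_smul, map_zero, LinearMap.zero_apply]
  have hzero : B (f - u.sum fun i r => r • g i) = 0 := b.ext fun j => by
    rw [map_sub, LinearMap.sub_apply, hsum, sub_self, LinearMap.zero_apply]
  exact sub_eq_zero.mp (hB _ fun y => by rw [hzero, LinearMap.zero_apply])

theorem statement15_general
    (P : Type) [Ring P] [Algebra F P]
    (mB pB : Module.Basis SuperPartition F P)
    -- the dual basis {g_Λ}: ⟨⟨↑g_Λ | ↓m_Ω⟩⟩_β = δ_{Λ,Ω}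
    (gB : SuperPartition → P)
    (hgdual : ∀ Λ Ω : SuperPartition,
      Λ.sgn * spGen pB βp (gB Λ) (mB Ω) = if Λ = Ω then 1 else 0)
    -- the Jack superpolynomials
    (J : SuperPartition → P)
    (hJtri : IsMonicTriangular mB J)
    (hJorth : ∀ Λ Ω : SuperPartition, Λ ≠ Ω → spGen pB βp (J Λ) (J Ω) = 0) :
    ∀ Λ : SuperPartition, ∃ u : SuperPartition →₀ F,
      (∀ Ω ∈ u.support, bruhatLE Λ Ω) ∧ u Λ ≠ 0 ∧
      J Λ = u.sum fun Ω r => r • gB Ω := by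
  intro Λ
  set B := spForm pB βp
  have hB : B.SeparatingLeft := spForm_separatingLeft pB RatFunc.X_ne_zero
  have horth : ∀ Λ Ψ, Λ ≠ Ψ → B (J Λ) (J Ψ) = 0 := by simpa only [B, spForm_apply] using hJorth
  have hdual : ∀ Ψ Ω, B (gB Ψ) (mB Ω) = if Ψ = Ω then Ψ.sgn else 0 := fun Ψ Ω => by
    rw [spForm_apply, ← one_mul (spGen _ _ _ _), ← Ψ.sgn_mul_self, mul_assoc, hgdual]
    split_ifs <;> simp
  set c : SuperPartition → F := fun Ω => Ω.sgn * B (J Λ) (mB Ω)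
  have hc : ∀ Ω, c Ω ≠ 0 → bruhatLE Λ Ω := fun Ω h =>
    hJtri.bruhatLE_of_form_ne_zero horth (right_ne_zero_of_mul h)
  let u := Finsupp.ofSupportFinite c ((finite_setOf_bruhatLE Λ).subset hc)
  refine ⟨u, fun Ω hΩ => hc Ω (Finsupp.mem_support_iff.mp hΩ), ?_,
    hB.eq_finsuppSum_of_dual mB SuperPartition.sgn_mul_self hdual (J Λ) fun _ => rfl⟩
  show Λ.sgn * B (J Λ) (mB Λ) ≠ 0
  rw [hJtri.form_basis_self horth]
  exact mul_ne_zero Λ.sgn_ne_zero (hJtri.form_self_ne_zero hB horth Λ)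

theorem statement15
    (P : Type) [Ring P] [Algebra F P]
    (mB pB : Module.Basis SuperPartition F P)
    (hone : pB SuperPartition.empty = 1)
    (hmul : ∀ Λ, pB Λ = prodRows (fun n => pB (bRow n)) (fun k => pB (fRow k)) Λ)
    (hmpB : ∀ n, 1 ≤ n → pB (bRow n) = mB (bRow n))
    (hmpF : ∀ k, pB (fRow k) = mB (fRow k))
    (hhom : ∀ Λ Ω, (pB.repr (mB Λ)) Ω ≠ 0 → Ω.bdeg = Λ.bdeg ∧ Ω.fdeg = Λ.fdeg)
    -- the dual basis {g_Λ}: ⟨⟨↑g_Λ | ↓m_Ω⟩⟩_β = δ_{Λ,Ω}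
    (gB : SuperPartition → P)
    (hgdual : ∀ Λ Ω : SuperPartition,
      Λ.sgn * spGen pB βp (gB Λ) (mB Ω) = if Λ = Ω then 1 else 0)
    -- the Jack superpolynomials
    (J : SuperPartition → P)
    (hJtri : IsMonicTriangular mB J)
    (hJorth : ∀ Λ Ω : SuperPartition, Λ ≠ Ω → spGen pB βp (J Λ) (J Ω) = 0) :
    ∀ Λ : SuperPartition, ∃ u : SuperPartition →₀ F,
      (∀ Ω ∈ u.support, bruhatLE Λ Ω) ∧ u Λ ≠ 0 ∧
      J Λ = u.sum fun Ω r => r • gB Ω :=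
  statement15_general P mB pB gB hgdual J hJtri hJorth
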